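/- arXiv:1712.05047 — 2 statements merged into one kernel-verified Lean document; each statement's English description precedes it below -/
import Mathlib

section
/- Let K be a field of characteristic different from 2 and let E be an elliptic curve over K given by y² = f(x) with f ∈ K[x] a monic cubic without repeated roots. Then the following are equivalent: (i) E(K) contains a point of order 6; (ii) there exists t ∈ K with t ∉ {0, −4, 1/2} such that E is K-isomorphic to the elliptic curve E⁽⁶⁾_t : y² = (x + 1)(x² + (t² + 2t)x + t²). -/
/-!
A point `(x₀, y₀)` with `y₀ ≠ 0` has order 3 exactly when, after moving `x₀` to `0`, its tangent
`y = αx + y₀` meets the curve only there, i.e. the curve becomes `y² = x³ + (αx + y₀)²`.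
A point of order 2 is then `(e, 0)` with `e³ + (αe + y₀)² = 0`; rescaling by `u = (αe + y₀)/e`,
for which `u² = -e`, moves it to `x = -1` and turns the curve into `y² = x³ + ((t + 1)x + t)²`
with `t = y₀/u³`, which is `E⁽⁶⁾_t`. The excluded values of `t` are the zeros of
`Δ = 16 t³ (t + 4) (2t - 1)²`.
-/

open WeierstrassCurve

theorem exists_addOrderOf_eq_mul_iff {G : Type*} [AddCommGroup G] {m n : ℕ} (hm : m ≠ 0)
    (hn : n ≠ 0) (hmn : m.Coprime n) :
    (∃ g : G, addOrderOf g = m * n) ↔ (∃ a : G, addOrderOf a = m) ∧ ∃ b : G, addOrderOf b = n := by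
  constructor
  · rintro ⟨g, hg⟩
    refine ⟨⟨n • g, ?_⟩, m • g, ?_⟩
    · rw [addOrderOf_nsmul_of_dvd hn (hg ▸ dvd_mul_left n m), hg, Nat.mul_div_cancel _ (by omega)]
    · rw [addOrderOf_nsmul_of_dvd hm (hg ▸ dvd_mul_right m n), hg,
        Nat.mul_div_cancel_left _ (by omega)]
  · rintro ⟨⟨a, rfl⟩, b, rfl⟩
    exact ⟨a + b, (AddCommute.all a b).addOrderOf_add_eq_mul_addOrderOf_of_coprime hmn⟩

namespace WeierstrassCurve

section flexCurve

variable {R : Type*} [CommRing R]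

/-- `y² = x³ + (αx + β)²`: the line `y = αx + β` meets it only at `(0, β)`, a flex. -/
def flexCurve (α β : R) : WeierstrassCurve R := ⟨0, α ^ 2, 0, 2 * α * β, β ^ 2⟩

lemma flexCurve_Δ (α β : R) : (flexCurve α β).Δ = 16 * β ^ 3 * (4 * α ^ 3 - 27 * β) := by
  simp only [flexCurve, Δ, b₂, b₄, b₆, b₈]
  ring

lemma flexCurve_equation_iff (α β x y : R) :
    (flexCurve α β).toAffine.Equation x y ↔ y ^ 2 = x ^ 3 + (α * x + β) ^ 2 := by
  rw [Affine.equation_iff]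
  simp only [flexCurve]
  constructor <;> intro h <;> linear_combination h

lemma smul_flexCurve (u : Rˣ) (α β : R) :
    (⟨u, 0, 0, 0⟩ : VariableChange R) • flexCurve α β = flexCurve (↑u⁻¹ * α) (↑u⁻¹ ^ 3 * β) := by
  ext <;> simp only [variableChange_a₁, variableChange_a₂, variableChange_a₃, variableChange_a₄,
    variableChange_a₆, flexCurve] <;> ring

lemma equation_translate_iff (W : WeierstrassCurve R) (r x y : R) :
    ((⟨1, r, 0, 0⟩ : VariableChange R) • W).toAffine.Equation x y ↔
      W.toAffine.Equation (x + r) y := by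
  rw [Affine.equation_iff, Affine.equation_iff]
  simp only [variableChange_a₁, variableChange_a₂, variableChange_a₃, variableChange_a₄,
    variableChange_a₆, inv_one, Units.val_one, one_pow, one_mul]
  constructor <;> intro h <;> linear_combination h

end flexCurve

namespace Affine

variable {F : Type*} [Field F] {W : Affine F} {x y : F}

lemma negY_eq_neg (h₁ : W.a₁ = 0) (h₃ : W.a₃ = 0) (x y : F) : W.negY x y = -y := by
  simp [negY, h₁, h₃]

lemma translate_eq_flexCurve_iff (h₁ : W.a₁ = 0) (h₃ : W.a₃ = 0) (hxy : W.Equation x y) (α : F) :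
    (⟨1, x, 0, 0⟩ : VariableChange F) • W = flexCurve α y ↔
      α ^ 2 = W.a₂ + 3 * x ∧ 2 * α * y = 3 * x ^ 2 + 2 * W.a₂ * x + W.a₄ := by
  rw [equation_iff, h₁, h₃] at hxy
  rw [WeierstrassCurve.ext_iff]
  simp only [variableChange_a₁, variableChange_a₂, variableChange_a₃, variableChange_a₄,
    variableChange_a₆, flexCurve, inv_one, Units.val_one, one_pow, one_mul, h₁, h₃]
  constructor
  · rintro ⟨-, ha₂, -, ha₄, -⟩
    exact ⟨by linear_combination -ha₂, by linear_combination -ha₄⟩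
  · rintro ⟨ha₂, ha₄⟩
    refine ⟨by ring, by linear_combination -ha₂, by ring, by linear_combination -ha₄, ?_⟩
    linear_combination -hxy

variable [DecidableEq F]

lemma Point.two_nsmul_some_eq_zero_iff {h : W.Nonsingular x y} :
    2 • Point.some x y h = 0 ↔ y = W.negY x y := by
  rw [two_nsmul]
  refine ⟨fun h0 => ?_, Point.add_self_of_Y_eq⟩
  by_contra hy
  exact Point.some_ne_zero _ ((Point.add_self_of_Y_ne hy).symm.trans h0)

lemma Point.three_nsmul_some_eq_zero_iff {h : W.Nonsingular x y} (hy : y ≠ W.negY x y) :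
    3 • Point.some x y h = 0 ↔ W.addX x x (W.slope x x y y) = x := by
  rw [show (3 : ℕ) = 2 + 1 from rfl, succ_nsmul, add_eq_zero_iff_eq_neg, two_nsmul,
    Point.add_self_of_Y_ne hy, Point.neg_some, Point.some.injEq, and_iff_left_of_imp]
  intro hx
  simp only [addY, negAddY, hx, sub_self, mul_zero, zero_add]

lemma Point.addOrderOf_some_eq_two_iff (h2 : (2 : F) ≠ 0) (h₁ : W.a₁ = 0) (h₃ : W.a₃ = 0)
    (h : W.Nonsingular x y) : addOrderOf (Point.some x y h) = 2 ↔ y = 0 := by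
  rw [addOrderOf_eq_prime_iff, two_nsmul_some_eq_zero_iff, and_iff_left (Point.some_ne_zero h),
    negY_eq_neg h₁ h₃, eq_neg_iff_add_eq_zero, ← two_mul, mul_eq_zero, or_iff_right h2]

lemma Point.addOrderOf_some_eq_three_iff (h2 : (2 : F) ≠ 0) (h₁ : W.a₁ = 0) (h₃ : W.a₃ = 0)
    (h : W.Nonsingular x y) (hy : y ≠ 0) :
    addOrderOf (Point.some x y h) = 3 ↔
      ∃ α, (⟨1, x, 0, 0⟩ : VariableChange F) • W = flexCurve α y := by
  have h2y : 2 * y ≠ 0 := mul_ne_zero h2 hy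
  have hy' : y ≠ W.negY x y := by
    rw [negY_eq_neg h₁ h₃]
    exact fun hyy => h2y (by linear_combination hyy)
  have hslope : 2 * W.slope x x y y * y = 3 * x ^ 2 + 2 * W.a₂ * x + W.a₄ := by
    rw [slope_of_Y_ne rfl hy', negY_eq_neg h₁ h₃, h₁, sub_neg_eq_add, ← two_mul]
    field_simp
    ring
  simp_rw [addOrderOf_eq_prime_iff, three_nsmul_some_eq_zero_iff hy',
    and_iff_left (Point.some_ne_zero h), translate_eq_flexCurve_iff h₁ h₃ h.1, addX, h₁]
  constructor
  · exact fun hx => ⟨_, by linear_combination hx, hslope⟩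
  · rintro ⟨α, hα, hαy⟩
    obtain rfl : α = W.slope x x y y :=
      mul_right_cancel₀ h2y (by linear_combination hαy - hslope)
    linear_combination hα

end Affine

lemma exists_addOrderOf_eq_six_iff {F : Type*} [Field F] [DecidableEq F] {W : WeierstrassCurve F}
    (h2 : (2 : F) ≠ 0) (h₁ : W.a₁ = 0) (h₃ : W.a₃ = 0) (hΔ : W.Δ ≠ 0) :
    (∃ P : W.toAffine.Point, addOrderOf P = 6) ↔
      ∃ r α β e : F, β ≠ 0 ∧ e ^ 3 + (α * e + β) ^ 2 = 0 ∧
        (⟨1, r, 0, 0⟩ : VariableChange F) • W = flexCurve α β := by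
  rw [show 6 = 3 * 2 from rfl,
    exists_addOrderOf_eq_mul_iff three_ne_zero two_ne_zero (by norm_num)]
  constructor
  · rintro ⟨⟨P, hP3⟩, T, hT2⟩
    obtain _ | ⟨x, y, hP⟩ := P
    · simp [← Affine.Point.zero_def] at hP3
    obtain _ | ⟨e, y', hT⟩ := T
    · simp [← Affine.Point.zero_def] at hT2
    have hy : y ≠ 0 := by
      rintro rfl
      have := (Affine.Point.addOrderOf_some_eq_two_iff h2 h₁ h₃ hP).mpr rfl
      omega
    obtain ⟨α, hW⟩ := (Affine.Point.addOrderOf_some_eq_three_iff h2 h₁ h₃ hP hy).mp hP3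
    obtain rfl := (Affine.Point.addOrderOf_some_eq_two_iff h2 h₁ h₃ hT).mp hT2
    have he : W.toAffine.Equation (e - x + x) 0 := by rw [sub_add_cancel]; exact hT.1
    rw [← equation_translate_iff, hW, flexCurve_equation_iff] at he
    exact ⟨x, α, y, e - x, hy, by linear_combination -he, hW⟩
  · rintro ⟨r, α, β, e, hβ, he, hW⟩
    have hP : W.toAffine.Nonsingular (0 + r) β := by
      rw [← Affine.equation_iff_nonsingular_of_Δ_ne_zero hΔ, ← equation_translate_iff, hW,
        flexCurve_equation_iff]
      ring
    have hT : W.toAffine.Nonsingular (e + r) 0 := by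
      rw [← Affine.equation_iff_nonsingular_of_Δ_ne_zero hΔ, ← equation_translate_iff, hW,
        flexCurve_equation_iff]
      linear_combination -he
    rw [zero_add] at hP
    exact ⟨⟨_, (Affine.Point.addOrderOf_some_eq_three_iff h2 h₁ h₃ hP hβ).mpr ⟨α, hW⟩⟩,
      _, (Affine.Point.addOrderOf_some_eq_two_iff h2 h₁ h₃ hT).mpr rfl⟩

section normalForm

variable {F : Type*} [Field F]

lemma flexCurve_add_one_self (t : F) :
    flexCurve (t + 1) t = ⟨0, (t ^ 2 + 2 * t) + 1, 0, (t ^ 2 + 2 * t) + t ^ 2, t ^ 2⟩ := by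
  ext <;> simp only [flexCurve] <;> ring

lemma exists_smul_flexCurve_eq {α β e : F} (hβ : β ≠ 0) (he : e ^ 3 + (α * e + β) ^ 2 = 0) :
    ∃ (u : Fˣ) (t : F),
      (⟨u, 0, 0, 0⟩ : VariableChange F) • flexCurve α β = flexCurve (t + 1) t := by
  have he0 : e ≠ 0 := by
    rintro rfl
    exact hβ (by simpa using he)
  have hline : α * e + β ≠ 0 := by
    intro h0
    exact he0 (pow_eq_zero_iff three_ne_zero |>.mp (by linear_combination he - (α * e + β) * h0))
  set u := (α * e + β) / e
  have hu : u ≠ 0 := div_ne_zero hline he0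
  have hue : u * e = α * e + β := div_mul_cancel₀ _ he0
  have hu2 : u ^ 2 = -e := by
    refine mul_right_cancel₀ (pow_ne_zero 2 he0) ?_
    linear_combination (u * e + α * e + β) * hue + he
  refine ⟨Units.mk0 u hu, u⁻¹ ^ 3 * β, ?_⟩
  rw [smul_flexCurve, Units.val_inv_eq_inv_val, Units.val_mk0]
  congr 1
  field_simp
  linear_combination (α - u) * hu2 + hue

lemma translate_smul_eq_flexCurve_of_smul_eq {W : WeierstrassCurve F} (h2 : (2 : F) ≠ 0)
    (h₁ : W.a₁ = 0) (h₃ : W.a₃ = 0) {C : VariableChange F} {α β : F}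
    (hC : C • W = flexCurve α β) :
    (⟨1, C.r, 0, 0⟩ : VariableChange F) • W = flexCurve (C.u * α) (C.u ^ 3 * β) := by
  have hs : C.s = 0 := by
    have := congrArg a₁ hC
    simp only [variableChange_a₁, h₁, flexCurve, zero_add, mul_eq_zero, Units.ne_zero,
      false_or] at this
    exact this.resolve_left h2
  have ht : C.t = 0 := by
    have := congrArg a₃ hC
    simp only [variableChange_a₃, h₁, h₃, flexCurve, mul_zero, zero_add, mul_eq_zero,
      pow_eq_zero_iff three_ne_zero, Units.ne_zero, false_or] at this
    exact this.resolve_left h2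
  have hdecomp : C = ⟨C.u, 0, 0, 0⟩ * ⟨1, C.r, 0, 0⟩ := by
    ext <;> simp [VariableChange.mul_def, hs, ht]
  have hscale : (⟨C.u, 0, 0, 0⟩⁻¹ : VariableChange F) = ⟨C.u⁻¹, 0, 0, 0⟩ := by
    ext <;> simp [VariableChange.inv_def]
  rw [hdecomp, mul_smul, smul_eq_iff_eq_inv_smul, hscale, smul_flexCurve] at hC
  simpa using hC

end normalForm

end WeierstrassCurve

open Classical in
/-- an elliptic curve `y² = f(x)` over a field of characteristic ≠ 2 has a
`K`-point of order 6 if and only if it is `K`-isomorphic to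
`E⁽⁶⁾_t : y² = (x + 1)(x² + (t² + 2t)x + t²)` for some `t ∉ {0, −4, 1/2}`.  The curve
`E⁽⁶⁾_t` has expanded Weierstrass form `y² = x³ + (t² + 2t + 1)x² + (2t² + 2t)x + t²`. -/
theorem order_six_family {K : Type*} [Field K] (h2 : (2 : K) ≠ 0)
    (E : WeierstrassCurve K) (hE₁ : E.a₁ = 0) (hE₃ : E.a₃ = 0) (hΔ : E.Δ ≠ 0) :
    (∃ P : E.toAffine.Point, addOrderOf P = 6) ↔
    ∃ t : K, t ≠ 0 ∧ t ≠ -4 ∧ t ≠ 1 / 2 ∧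
      ∃ C : VariableChange K,
        C • E =
          ⟨0, (t ^ 2 + 2 * t) + 1, 0, (t ^ 2 + 2 * t) + t ^ 2, t ^ 2⟩ := by
  rw [exists_addOrderOf_eq_six_iff h2 hE₁ hE₃ hΔ]
  constructor
  · rintro ⟨r, α, β, e, hβ, he, hE⟩
    obtain ⟨u, t, ht⟩ := exists_smul_flexCurve_eq hβ he
    have hC : (⟨u, 0, 0, 0⟩ * ⟨1, r, 0, 0⟩ : VariableChange K) • E = flexCurve (t + 1) t := by
      rw [mul_smul, hE, ht]
    have hΔt : 16 * t ^ 3 * (t + 4) * (2 * t - 1) ^ 2 ≠ 0 := by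
      rw [show 16 * t ^ 3 * (t + 4) * (2 * t - 1) ^ 2 = (flexCurve (t + 1) t).Δ by
        rw [flexCurve_Δ]; ring, ← hC, variableChange_Δ]
      exact mul_ne_zero (by simp) hΔ
    refine ⟨t, ?_, ?_, ?_, _, hC.trans (flexCurve_add_one_self t)⟩
    · rintro rfl
      simp at hΔt
    · rintro rfl
      exact hΔt (by ring)
    · rintro rfl
      exact hΔt (by rw [mul_one_div_cancel h2]; ring)
  · rintro ⟨t, ht0, -, -, C, hC⟩
    rw [← flexCurve_add_one_self] at hC
    exact ⟨C.r, C.u * (t + 1), C.u ^ 3 * t, -C.u ^ 2, mul_ne_zero (by simp) ht0, by ring,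
      translate_smul_eq_flexCurve_of_smul_eq h2 hE₁ hE₃ hC⟩
end

section
/- Let K be a field of characteristic 2 and let E be an elliptic curve over K. Then E(K) contains a point of order 4 if and only if there exists a nonzero γ ∈ K such that E is K-isomorphic to the elliptic curve E_{4,γ} : y² + xy = x³ + γ⁴. -/
/-!
A change of variables induces an isomorphism of point groups, so we may assume that `E` is in
characteristic-two normal form. If `a₁ = 0`, a point of order 2 would have `a₃ = 0`, making
`Δ = a₃⁴` vanish; so `a₁ = 1` and `a₃ = a₄ = 0`. Then the points of order 2 are those with
`x = 0`, hence `P = (x, y)` has order 4 iff `x ≠ 0` and `x(2P) = λ² + λ + a₂ = 0`, where `λ` is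
the tangent slope at `P`. The shear `y ↦ y + λx` then kills `a₂`, and the curve equation forces
`a₆ = x⁴`. Conversely, on `E_{4,γ}` the point `(γ, γ²)` has tangent slope 0.
-/

open WeierstrassCurve

namespace WeierstrassCurve.VariableChange

variable {F : Type*} [Field F] (W : WeierstrassCurve F) (C : VariableChange F)

/-- `(C.mapX x, C.mapY x y)` are the coordinates on `C • W` of the point `(x, y)` of `W`: they
invert `(x', y') ↦ (u²x' + r, u³y' + u²sx' + t)`. -/
def mapX (x : F) : F := (↑C.u⁻¹ : F) ^ 2 * (x - C.r)

def mapY (x y : F) : F := (↑C.u⁻¹ : F) ^ 3 * (y - C.s * (x - C.r) - C.t)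

lemma mapX_injective : Function.Injective C.mapX := fun _ _ h =>
  sub_left_injective (mul_left_cancel₀ (pow_ne_zero 2 C.u⁻¹.ne_zero) h)

lemma mapY_injective (x : F) : Function.Injective (C.mapY x) := fun _ _ h =>
  sub_left_injective (sub_left_injective (mul_left_cancel₀ (pow_ne_zero 3 C.u⁻¹.ne_zero) h))

variable {W}

lemma negY_mapX_mapY (x y : F) :
    (C • W).toAffine.negY (C.mapX x) (C.mapY x y) = C.mapY x (W.toAffine.negY x y) := by
  simp only [Affine.negY, mapX, mapY, variableChange_a₁, variableChange_a₃]
  ring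

lemma evalEval_polynomial_mapX_mapY (x y : F) :
    (C • W).toAffine.polynomial.evalEval (C.mapX x) (C.mapY x y)
      = (↑C.u⁻¹ : F) ^ 6 * W.toAffine.polynomial.evalEval x y := by
  simp only [Affine.evalEval_polynomial, mapX, mapY, variableChange_a₁, variableChange_a₂,
    variableChange_a₃, variableChange_a₄, variableChange_a₆]
  ring

lemma evalEval_polynomialX_mapX_mapY (x y : F) :
    (C • W).toAffine.polynomialX.evalEval (C.mapX x) (C.mapY x y)
      = (↑C.u⁻¹ : F) ^ 4 * (W.toAffine.polynomialX.evalEval x y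
          + C.s * W.toAffine.polynomialY.evalEval x y) := by
  simp only [Affine.evalEval_polynomialX, Affine.evalEval_polynomialY, mapX, mapY,
    variableChange_a₁, variableChange_a₂, variableChange_a₄]
  ring

lemma evalEval_polynomialY_mapX_mapY (x y : F) :
    (C • W).toAffine.polynomialY.evalEval (C.mapX x) (C.mapY x y)
      = (↑C.u⁻¹ : F) ^ 3 * W.toAffine.polynomialY.evalEval x y := by
  simp only [Affine.evalEval_polynomialY, mapX, mapY, variableChange_a₁, variableChange_a₃]
  ring

lemma equation_mapX_mapY {x y : F} (h : W.toAffine.Equation x y) :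
    (C • W).toAffine.Equation (C.mapX x) (C.mapY x y) := by
  rw [Affine.Equation, evalEval_polynomial_mapX_mapY, h, mul_zero]

lemma nonsingular_mapX_mapY {x y : F} (h : W.toAffine.Nonsingular x y) :
    (C • W).toAffine.Nonsingular (C.mapX x) (C.mapY x y) := by
  have hu : (↑C.u⁻¹ : F) ≠ 0 := C.u⁻¹.ne_zero
  refine ⟨C.equation_mapX_mapY h.1, ?_⟩
  rw [evalEval_polynomialX_mapX_mapY, evalEval_polynomialY_mapX_mapY]
  by_cases hY : W.toAffine.polynomialY.evalEval x y = 0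
  · rw [hY, mul_zero, add_zero]
    exact .inl (mul_ne_zero (pow_ne_zero _ hu) (h.2.resolve_right (not_not.mpr hY)))
  · exact .inr (mul_ne_zero (pow_ne_zero _ hu) hY)

lemma addX_mapX (x₁ x₂ l : F) :
    (C • W).toAffine.addX (C.mapX x₁) (C.mapX x₂) ((↑C.u⁻¹ : F) * (l - C.s))
      = C.mapX (W.toAffine.addX x₁ x₂ l) := by
  simp only [Affine.addX, mapX, variableChange_a₁, variableChange_a₂]
  ring

lemma addY_mapX_mapY (x₁ x₂ y₁ l : F) :
    (C • W).toAffine.addY (C.mapX x₁) (C.mapX x₂) (C.mapY x₁ y₁) ((↑C.u⁻¹ : F) * (l - C.s))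
      = C.mapY (W.toAffine.addX x₁ x₂ l) (W.toAffine.addY x₁ x₂ y₁ l) := by
  simp only [Affine.addY, Affine.negAddY, Affine.addX, Affine.negY, mapX, mapY,
    variableChange_a₁, variableChange_a₂, variableChange_a₃]
  ring

lemma slope_mapX_mapY [DecidableEq F] {x₁ x₂ y₁ y₂ : F} (h₁ : W.toAffine.Equation x₁ y₁)
    (h₂ : W.toAffine.Equation x₂ y₂) (hxy : ¬(x₁ = x₂ ∧ y₁ = W.toAffine.negY x₂ y₂)) :
    (C • W).toAffine.slope (C.mapX x₁) (C.mapX x₂) (C.mapY x₁ y₁) (C.mapY x₂ y₂)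
      = (↑C.u⁻¹ : F) * (W.toAffine.slope x₁ x₂ y₁ y₂ - C.s) := by
  have hu : (↑C.u⁻¹ : F) ≠ 0 := C.u⁻¹.ne_zero
  by_cases hx : x₁ = x₂
  · have hy : y₁ ≠ W.toAffine.negY x₂ y₂ := fun hy => hxy ⟨hx, hy⟩
    obtain rfl := hx
    obtain rfl := Affine.Y_eq_of_Y_ne h₁ h₂ rfl hy
    have hy' : C.mapY x₁ y₁ ≠ (C • W).toAffine.negY (C.mapX x₁) (C.mapY x₁ y₁) := by
      rw [negY_mapX_mapY]
      exact (C.mapY_injective x₁).ne hy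
    have hY : W.toAffine.polynomialY.evalEval x₁ y₁ ≠ 0 := by
      rw [Affine.evalEval_polynomialY]
      exact fun h => hy (by rw [Affine.negY]; linear_combination h)
    rw [Affine.slope_of_Y_ne_eq_evalEval rfl hy', Affine.slope_of_Y_ne_eq_evalEval rfl hy,
      evalEval_polynomialX_mapX_mapY, evalEval_polynomialY_mapX_mapY]
    field_simp
    ring
  · have hX : C.mapX x₁ - C.mapX x₂ = (↑C.u⁻¹ : F) ^ 2 * (x₁ - x₂) := by
      simp only [mapX]; ring
    have hY : C.mapY x₁ y₁ - C.mapY x₂ y₂ = (↑C.u⁻¹ : F) ^ 3 * (y₁ - y₂ - C.s * (x₁ - x₂)) := by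
      simp only [mapY]; ring
    have hx' : x₁ - x₂ ≠ 0 := sub_ne_zero_of_ne hx
    rw [Affine.slope_of_X_ne hx, Affine.slope_of_X_ne (C.mapX_injective.ne hx), hX, hY]
    field_simp

end WeierstrassCurve.VariableChange

namespace WeierstrassCurve.Affine.Point

variable {F : Type*} [Field F] [DecidableEq F] {W : WeierstrassCurve F} (C : VariableChange F)

noncomputable def variableChange : W.toAffine.Point →+ (C • W).toAffine.Point where
  toFun
    | 0 => 0
    | some _ _ h => some _ _ (C.nonsingular_mapX_mapY h)
  map_zero' := rfl
  map_add' := by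
    rintro (_ | @⟨x₁, y₁, h₁⟩) (_ | @⟨x₂, y₂, h₂⟩)
    any_goals rfl
    by_cases hxy : x₁ = x₂ ∧ y₁ = W.toAffine.negY x₂ y₂
    · rw [add_of_Y_eq hxy.1 hxy.2, add_of_Y_eq (congr_arg C.mapX hxy.1)
        (by rw [C.negY_mapX_mapY, hxy.1, hxy.2])]
    · have hxy' : ¬(C.mapX x₁ = C.mapX x₂ ∧
          C.mapY x₁ y₁ = (C • W).toAffine.negY (C.mapX x₂) (C.mapY x₂ y₂)) := by
        rintro ⟨hx, hy⟩
        obtain rfl := C.mapX_injective hx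
        rw [C.negY_mapX_mapY] at hy
        exact hxy ⟨rfl, C.mapY_injective x₁ hy⟩
      rw [add_some hxy, add_some hxy']
      change some _ _ _ = some _ _ _
      congr 1
      · rw [C.slope_mapX_mapY h₁.1 h₂.1 hxy, C.addX_mapX]
      · rw [C.slope_mapX_mapY h₁.1 h₂.1 hxy, C.addY_mapX_mapY]

lemma variableChange_injective : Function.Injective (variableChange (W := W) C) := by
  rintro (_ | @⟨x₁, y₁, h₁⟩) (_ | @⟨x₂, y₂, h₂⟩) h
  any_goals contradiction
  · rfl
  · obtain ⟨hx, hy⟩ := some.inj h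
    obtain rfl := C.mapX_injective hx
    obtain rfl := C.mapY_injective x₁ hy
    rfl

lemma addOrderOf_variableChange (P : W.toAffine.Point) :
    addOrderOf (variableChange C P) = addOrderOf P :=
  addOrderOf_injective _ (variableChange_injective C) P

lemma exists_addOrderOf_variableChange_iff (n : ℕ) :
    (∃ P : (C • W).toAffine.Point, addOrderOf P = n) ↔
      ∃ P : W.toAffine.Point, addOrderOf P = n := by
  refine ⟨fun ⟨P, hP⟩ => ?_,
    fun ⟨P, hP⟩ => ⟨variableChange C P, by rw [addOrderOf_variableChange, hP]⟩⟩
  have h : ∃ Q : (C⁻¹ • C • W).toAffine.Point, addOrderOf Q = n :=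
    ⟨variableChange C⁻¹ P, by rw [addOrderOf_variableChange, hP]⟩
  rwa [inv_smul_smul] at h

end WeierstrassCurve.Affine.Point

lemma addOrderOf_eq_four_iff {G : Type*} [AddMonoid G] {a : G} :
    addOrderOf a = 4 ↔ a + a ≠ 0 ∧ a + a + (a + a) = 0 := by
  have h4 : 4 • a = a + a + (a + a) := by
    rw [show 4 = 2 * 2 from rfl, mul_nsmul, two_nsmul, two_nsmul]
  constructor
  · intro h
    refine ⟨fun h2 => ?_, by rw [← h4, ← h, addOrderOf_nsmul_eq_zero]⟩
    have := addOrderOf_dvd_of_nsmul_eq_zero (by rwa [two_nsmul] : 2 • a = 0)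
    rw [h] at this
    norm_num at this
  · rintro ⟨h2, h4'⟩
    exact addOrderOf_eq_prime_pow (p := 2) (n := 1) (by rwa [pow_one, two_nsmul])
      (by rwa [show 2 ^ (1 + 1) = 4 from rfl, h4])

namespace WeierstrassCurve.Affine

variable {F : Type*} [Field F] {W : WeierstrassCurve F}

lemma Point.some_add_self_eq_zero_iff [DecidableEq F] {x y : F} (h : W.toAffine.Nonsingular x y) :
    some _ _ h + some _ _ h = 0 ↔ y = W.toAffine.negY x y :=
  ⟨fun h2 => by_contra fun hy => some_ne_zero _ ((add_self_of_Y_ne hy).symm.trans h2),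
    add_self_of_Y_eq⟩

variable [CharP F 2]

lemma Y_eq_negY_iff_of_char_two (x y : F) :
    y = W.toAffine.negY x y ↔ W.a₁ * x + W.a₃ = 0 := by
  rw [negY, CharTwo.sub_eq_add, CharTwo.sub_eq_add, CharTwo.neg_eq, add_assoc, left_eq_add]

lemma Point.eq_zero_of_add_self_eq_zero_of_isCharTwoJEqZeroNF [DecidableEq F] [W.IsElliptic]
    [W.IsCharTwoJEqZeroNF] {P : W.toAffine.Point} (hP : P + P = 0) : P = 0 := by
  obtain _ | @⟨x, y, h⟩ := P
  · rfl
  rw [some_add_self_eq_zero_iff, Y_eq_negY_iff_of_char_two, a₁_of_isCharTwoJEqZeroNF, zero_mul,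
    zero_add] at hP
  have hΔ := W.isUnit_Δ
  rw [Δ_of_isCharTwoJEqZeroNF_of_char_two, hP] at hΔ
  simp at hΔ

section IsCharTwoJNeZeroNF

variable [W.IsCharTwoJNeZeroNF]

lemma Y_eq_negY_iff_of_isCharTwoJNeZeroNF (x y : F) : y = W.toAffine.negY x y ↔ x = 0 := by
  rw [Y_eq_negY_iff_of_char_two, a₁_of_isCharTwoJNeZeroNF, a₃_of_isCharTwoJNeZeroNF, one_mul,
    add_zero]

lemma addX_self_of_isCharTwoJNeZeroNF (x l : F) : W.toAffine.addX x x l = l ^ 2 + l + W.a₂ := by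
  rw [addX, a₁_of_isCharTwoJNeZeroNF]
  linear_combination -(W.a₂ + x) * CharTwo.two_eq_zero (R := F)

lemma slope_self_mul_of_isCharTwoJNeZeroNF [DecidableEq F] {x : F} (y : F) (hx : x ≠ 0) :
    W.toAffine.slope x x y y * x = x ^ 2 + y := by
  have hy : y ≠ W.toAffine.negY x y := (Y_eq_negY_iff_of_isCharTwoJNeZeroNF x y).not.mpr hx
  have hD : y - W.toAffine.negY x y = x := by
    rw [negY, a₁_of_isCharTwoJNeZeroNF, a₃_of_isCharTwoJNeZeroNF]
    linear_combination y * CharTwo.two_eq_zero (R := F)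
  rw [slope_of_Y_ne rfl hy, hD, div_mul_cancel₀ _ hx, a₁_of_isCharTwoJNeZeroNF,
    a₄_of_isCharTwoJNeZeroNF]
  linear_combination (x ^ 2 + W.a₂ * x - y) * CharTwo.two_eq_zero (R := F)

lemma Point.addOrderOf_some_eq_four_iff_of_isCharTwoJNeZeroNF [DecidableEq F] {x y : F}
    (h : W.toAffine.Nonsingular x y) : addOrderOf (some _ _ h) = 4 ↔
      x ≠ 0 ∧ W.a₂ = W.toAffine.slope x x y y ^ 2 + W.toAffine.slope x x y y := by
  rw [addOrderOf_eq_four_iff, Ne, some_add_self_eq_zero_iff, Y_eq_negY_iff_of_isCharTwoJNeZeroNF]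
  refine and_congr_right fun hx => ?_
  rw [add_self_of_Y_ne ((Y_eq_negY_iff_of_isCharTwoJNeZeroNF x y).not.mpr hx),
    some_add_self_eq_zero_iff, Y_eq_negY_iff_of_isCharTwoJNeZeroNF,
    addX_self_of_isCharTwoJNeZeroNF, CharTwo.add_eq_zero, eq_comm]

lemma variableChange_slope_smul_eq [DecidableEq F] {x y : F}
    (h : W.toAffine.Equation x y) (hx : x ≠ 0)
    (ha₂ : W.a₂ = W.toAffine.slope x x y y ^ 2 + W.toAffine.slope x x y y) :
    (⟨1, 0, W.toAffine.slope x x y y, 0⟩ : VariableChange F) • W = ⟨1, 0, 0, 0, x ^ 4⟩ := by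
  have h2 : (2 : F) = 0 := CharTwo.two_eq_zero
  have ha₁ := W.a₁_of_isCharTwoJNeZeroNF
  have ha₃ := W.a₃_of_isCharTwoJNeZeroNF
  have ha₄ := W.a₄_of_isCharTwoJNeZeroNF
  have hl := slope_self_mul_of_isCharTwoJNeZeroNF (W := W) y hx
  set l := W.toAffine.slope x x y y
  have ha₆ : W.a₆ = x ^ 4 := by
    rw [equation_iff, ha₁, ha₃, ha₄] at h
    linear_combination -h - x ^ 2 * ha₂ - (l * x + x ^ 2 + y + x) * hl
      - (x ^ 4 + x ^ 3 + x ^ 2 * y) * h2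
  ext <;> simp only [variableChange_a₁, variableChange_a₂, variableChange_a₃, variableChange_a₄,
    variableChange_a₆, inv_one, Units.val_one]
  · linear_combination ha₁ + l * h2
  · linear_combination ha₂ - l * ha₁
  · linear_combination ha₃
  · linear_combination ha₄ - l * ha₃
  · linear_combination ha₆

end IsCharTwoJNeZeroNF

end WeierstrassCurve.Affine

namespace WeierstrassCurve

variable {F : Type*} [Field F] [CharP F 2] [DecidableEq F]

lemma exists_variableChange_of_addOrderOf_eq_four {W : WeierstrassCurve F} [W.IsElliptic]
    [W.IsCharTwoNF] {P : W.toAffine.Point} (hP : addOrderOf P = 4) :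
    ∃ γ : F, γ ≠ 0 ∧ ∃ C : VariableChange F, C • W = ⟨1, 0, 0, 0, γ ^ 4⟩ := by
  cases ‹W.IsCharTwoNF› with
  | of_j_ne_zero =>
    obtain _ | @⟨x, y, h⟩ := P
    · rw [← Affine.Point.zero_def, addOrderOf_zero] at hP
      cases hP
    obtain ⟨hx, ha₂⟩ := (Affine.Point.addOrderOf_some_eq_four_iff_of_isCharTwoJNeZeroNF h).mp hP
    exact ⟨x, hx, _, Affine.variableChange_slope_smul_eq h.1 hx ha₂⟩
  | of_j_eq_zero =>
    obtain ⟨h2P, h4P⟩ := addOrderOf_eq_four_iff.mp hP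
    exact absurd (Affine.Point.eq_zero_of_add_self_eq_zero_of_isCharTwoJEqZeroNF h4P) h2P

lemma exists_addOrderOf_eq_four {γ : F} (hγ : γ ≠ 0) :
    ∃ P : (⟨1, 0, 0, 0, γ ^ 4⟩ : WeierstrassCurve F).toAffine.Point, addOrderOf P = 4 := by
  let E₄ : WeierstrassCurve F := ⟨1, 0, 0, 0, γ ^ 4⟩
  have : E₄.IsCharTwoJNeZeroNF := ⟨rfl, rfl, rfl⟩
  have h2 : (2 : F) = 0 := CharTwo.two_eq_zero
  have h : E₄.toAffine.Nonsingular γ (γ ^ 2) := by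
    refine ⟨by rw [Affine.equation_iff]; ring, .inr ?_⟩
    rw [Affine.evalEval_polynomialY]
    intro h0
    exact hγ (by linear_combination h0 - γ ^ 2 * h2)
  have hl : E₄.toAffine.slope γ γ (γ ^ 2) (γ ^ 2) = 0 := by
    have h0 := (Affine.slope_self_mul_of_isCharTwoJNeZeroNF (W := E₄) (γ ^ 2) hγ).trans
      (CharTwo.add_self_eq_zero _)
    exact (mul_eq_zero.mp h0).resolve_right hγ
  exact ⟨_, (Affine.Point.addOrderOf_some_eq_four_iff_of_isCharTwoJNeZeroNF h).mpr
    ⟨hγ, by rw [hl]; ring⟩⟩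

end WeierstrassCurve

open Classical in
/-- over a field of characteristic 2, an elliptic curve has a `K`-rational
point of order 4 if and only if it is `K`-isomorphic to `E_{4,γ} : y² + xy = x³ + γ⁴`
for some nonzero `γ ∈ K`. -/
theorem order_four_char_two {K : Type*} [Field K] [CharP K 2]
    (E : WeierstrassCurve K) [E.IsElliptic] :
    (∃ P : E.toAffine.Point, addOrderOf P = 4) ↔
    ∃ γ : K, γ ≠ 0 ∧ ∃ C : VariableChange K,
      C • E = ⟨1, 0, 0, 0, γ ^ 4⟩ := by
  constructor
  · rintro ⟨P, hP⟩
    obtain ⟨C₀, _⟩ := E.exists_variableChange_isCharTwoNF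
    obtain ⟨P₀, hP₀⟩ := (Affine.Point.exists_addOrderOf_variableChange_iff C₀ 4).mpr ⟨P, hP⟩
    obtain ⟨γ, hγ, C, hC⟩ := exists_variableChange_of_addOrderOf_eq_four hP₀
    exact ⟨γ, hγ, C * C₀, by rw [mul_smul, hC]⟩
  · rintro ⟨γ, hγ, C, hC⟩
    rw [← Affine.Point.exists_addOrderOf_variableChange_iff C, hC]
    exact exists_addOrderOf_eq_four hγ
end
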